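/- Let G be a finite group and p a prime. Then the intersection of the normalizers of all pronormal p-subgroups of G equals the intersection of the normalizers of all Sylow p-subgroups of G. That is, ⋂_{H a pronormal p-subgroup of G} N_G(H) = ⋂_{P ∈ Syl_p(G)} N_G(P). -/

import Mathlib

/-- The conjugate `H^g = g⁻¹ H g` of a subgroup `H`. -/
def conjSubgroup {G : Type*} [Group G] (g : G) (H : Subgroup G) : Subgroup G :=
  H.map (MulAut.conj g⁻¹).toMonoidHom

/-- `H` is pronormal in `G` if for every `g ∈ G` there exists
`x ∈ ⟨H, H^g⟩` with `H^x = H^g`. -/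
def IsPronormal {G : Type*} [Group G] (H : Subgroup G) : Prop :=
  ∀ g : G, ∃ x ∈ H ⊔ conjSubgroup g H, conjSubgroup x H = conjSubgroup g H

/-- `H` is weakly normal in `G` if `H^g ≤ N_G(H)` implies `g ∈ N_G(H)`. -/
def IsWeaklyNormal {G : Type*} [Group G] (H : Subgroup G) : Prop :=
  ∀ g : G, conjSubgroup g H ≤ Subgroup.normalizer (H : Set G) → g ∈ Subgroup.normalizer (H : Set G)

/-- `H` is an `𝓗`-subgroup of `G` if `N_G(H) ∩ H^g ≤ H` for all `g ∈ G`. -/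
def IsHSubgroup {G : Type*} [Group G] (H : Subgroup G) : Prop :=
  ∀ g : G, Subgroup.normalizer (H : Set G) ⊓ conjSubgroup g H ≤ H

/-- `H` is an `NE`-subgroup of `G` if `H = N_G(H) ∩ H^G`. -/
def IsNESubgroup {G : Type*} [Group G] (H : Subgroup G) : Prop :=
  H = Subgroup.normalizer (H : Set G) ⊓ Subgroup.normalClosure (H : Set G)

/-- A subgroup `H` satisfies the subnormalizer condition in `G` if for every
subgroup `K` of `G` such that `H` is a normal subgroup of `K`, one has
`N_G(K) ≤ N_G(H)`. -/
def SubnormalizerCondition {G : Type*} [Group G] (H : Subgroup G) : Prop :=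
  ∀ K : Subgroup G, H ≤ K → (H.subgroupOf K).Normal → Subgroup.normalizer (K : Set G) ≤ Subgroup.normalizer (H : Set G)

/-!
A pronormal subgroup `H` is weakly normal: if `H^g ≤ N_G(H)`, the element `x ∈ ⟨H, H^g⟩` given by
pronormality lies in `N_G(H)`, so `H^g = H^x = H`. In a nilpotent group the normalizer condition
forces a weakly normal subgroup to be normal. Now let `H` be a pronormal `p`-subgroup and `P` a
Sylow subgroup containing it. Since `P` is nilpotent, `P ≤ N_G(H)`; if `g` normalizes `P`, then
`H^g ≤ P ≤ N_G(H)` and weak normality gives `g ∈ N_G(H)`. Conversely, Sylow subgroups are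
pronormal, by Sylow's conjugacy theorem in `⟨P, P^g⟩`.
-/

open Subgroup

section

variable {G : Type*} [Group G]

lemma mem_conjSubgroup_iff {g a : G} {H : Subgroup G} :
    a ∈ conjSubgroup g H ↔ g * a * g⁻¹ ∈ H := by
  simp only [conjSubgroup, mem_map, MulEquiv.coe_toMonoidHom, MulAut.conj_apply, inv_inv]
  constructor
  · rintro ⟨h, hh, rfl⟩
    simpa [mul_assoc] using hh
  · exact fun h => ⟨g * a * g⁻¹, h, by group⟩

lemma conjSubgroup_eq_self_iff {g : G} {H : Subgroup G} :
    conjSubgroup g H = H ↔ g ∈ normalizer (H : Set G) := by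
  rw [mem_normalizer_iff, SetLike.ext_iff]
  simp only [mem_conjSubgroup_iff]
  exact ⟨fun h a => (h a).symm, fun h a => (h a).symm⟩

lemma conjSubgroup_le_of_mem_normalizer {g : G} {H K : Subgroup G} (hHK : H ≤ K)
    (hg : g ∈ normalizer (K : Set G)) : conjSubgroup g H ≤ K := fun a ha =>
  (mem_normalizer_iff.mp hg a).mpr (hHK (mem_conjSubgroup_iff.mp ha))

lemma conjSubgroup_subgroupOf {H K : Subgroup G} (g : K) :
    conjSubgroup g (H.subgroupOf K) = (conjSubgroup (g : G) H).subgroupOf K := by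
  ext a
  simp only [mem_conjSubgroup_iff, mem_subgroupOf, coe_mul, coe_inv]

lemma IsPronormal.isWeaklyNormal {H : Subgroup G} (hH : IsPronormal H) : IsWeaklyNormal H := by
  intro g hg
  obtain ⟨x, hx, hxg⟩ := hH g
  have hxN : x ∈ normalizer (H : Set G) := sup_le le_normalizer hg hx
  rw [conjSubgroup_eq_self_iff.mpr hxN] at hxg
  exact conjSubgroup_eq_self_iff.mp hxg.symm

lemma IsWeaklyNormal.subgroupOf {H K : Subgroup G} (hH : IsWeaklyNormal H) (hHK : H ≤ K) :
    IsWeaklyNormal (H.subgroupOf K) := by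
  intro g hg
  rw [← subgroupOf_normalizer_eq hHK, mem_subgroupOf]
  rw [conjSubgroup_subgroupOf, ← subgroupOf_normalizer_eq hHK] at hg
  refine hH g fun a ha => ?_
  have haK : a ∈ K := conjSubgroup_le_of_mem_normalizer hHK (le_normalizer g.2) ha
  exact mem_subgroupOf.mp (hg (x := ⟨a, haK⟩) (mem_subgroupOf.mpr ha))

lemma IsWeaklyNormal.normal [Group.IsNilpotent G] {H : Subgroup G} (hH : IsWeaklyNormal H) :
    H.Normal := by
  rw [← normalizer_eq_top_iff]
  -- `N_G(H)` is self-normalizing: `y ∈ N_G(N_G(H))` gives `H^y ≤ N_G(H)`, hence `y ∈ N_G(H)`.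
  by_contra hN
  obtain ⟨y, hyNN, hyN⟩ :=
    SetLike.exists_of_lt (Group.normalizerCondition_of_isNilpotent _ (lt_top_iff_ne_top.mpr hN))
  exact hyN (hH y (conjSubgroup_le_of_mem_normalizer le_normalizer hyNN))

lemma IsWeaklyNormal.le_normalizer_of_isNilpotent {H K : Subgroup G} [Group.IsNilpotent K]
    (hH : IsWeaklyNormal H) (hHK : H ≤ K) : K ≤ normalizer (H : Set G) :=
  (normal_subgroupOf_iff_le_normalizer hHK).mp (hH.subgroupOf hHK).normal

lemma IsWeaklyNormal.mem_normalizer_of_isNilpotent {H K : Subgroup G} [Group.IsNilpotent K]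
    (hH : IsWeaklyNormal H) (hHK : H ≤ K) {g : G} (hg : g ∈ normalizer (K : Set G)) :
    g ∈ normalizer (H : Set G) :=
  hH g ((conjSubgroup_le_of_mem_normalizer hHK hg).trans (hH.le_normalizer_of_isNilpotent hHK))

lemma Sylow.exists_smul_eq_of_le [Finite G] {p : ℕ} [Fact p.Prime] {P Q : Sylow p G}
    {K : Subgroup G} (hP : (P : Subgroup G) ≤ K) (hQ : (Q : Subgroup G) ≤ K) :
    ∃ k ∈ K, k • P = Q := by
  obtain ⟨k, hk⟩ := MulAction.exists_smul_eq K (P.subtype hP) (Q.subtype hQ)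
  rw [Sylow.smul_subtype] at hk
  exact ⟨k, k.2, Sylow.subtype_injective hk⟩

lemma Sylow.isPronormal [Finite G] {p : ℕ} [Fact p.Prime] (P : Sylow p G) :
    IsPronormal (P : Subgroup G) := by
  intro g
  have hconj (x : G) : conjSubgroup x P = ((x⁻¹ • P : Sylow p G) : Subgroup G) := rfl
  obtain ⟨k, hk, hkP⟩ := Sylow.exists_smul_eq_of_le (K := P ⊔ conjSubgroup g P) (Q := g⁻¹ • P)
    le_sup_left (hconj g ▸ le_sup_right)
  exact ⟨k⁻¹, inv_mem hk, by rw [hconj, hconj, inv_inv, hkP]⟩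

end

theorem iInf_normalizer_pronormal_p_eq_iInf_normalizer_sylow_p
    (G : Type*) [Group G] [Finite G] (p : ℕ) (hp : p.Prime) :
    (⨅ (H : Subgroup G) (_ : IsPGroup p H ∧ IsPronormal H), Subgroup.normalizer (H : Set G)) =
      ⨅ P : Sylow p G, Subgroup.normalizer ((P : Subgroup G) : Set G) := by
  have := Fact.mk hp
  apply le_antisymm
  · exact le_iInf fun P => iInf₂_le (P : Subgroup G) ⟨P.isPGroup', P.isPronormal⟩
  · refine le_iInf₂ fun H ⟨hHp, hpro⟩ => ?_
    obtain ⟨P, hHP⟩ := hHp.exists_le_sylow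
    have : Group.IsNilpotent P := P.isPGroup'.isNilpotent
    exact (iInf_le _ P).trans fun g hg => hpro.isWeaklyNormal.mem_normalizer_of_isNilpotent hHP hg
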